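/- arXiv:0912.1764 — 6 statements merged into one kernel-verified Lean document; each statement's English description precedes it below -/
import Mathlib

section
/- Let L = ⊕_{σ∈G} L_σ be a graded semiprime G-graded Lie algebra and let I be a graded essential ideal of L. Then the ideal I² = [I,I] is also a graded essential ideal of L. -/
/-!
`⁅I, I⁆` is spanned by brackets of homogeneous elements of `I`, which are homogeneous, so it is
graded. If `K` is a nonzero graded ideal, then `I ⊓ K` is a nonzero graded ideal because `I` is
graded essential, so by graded semiprimeness `0 ≠ ⁅I ⊓ K, I ⊓ K⁆ ≤ ⁅I, I⁆ ⊓ K`.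
-/

open DirectSum

section Module

variable {ι R M : Type*} [DecidableEq ι] [Semiring R] [AddCommMonoid M] [Module R M]
  {ℳ : ι → Submodule R M} [Decomposition ℳ]

theorem Submodule.isHomogeneous_span {s : Set M}
    (hs : ∀ x ∈ s, SetLike.IsHomogeneousElem ℳ x) :
    SetLike.IsHomogeneous ℳ (Submodule.span R s) := by
  intro i y hy
  induction hy using Submodule.span_induction with
  | mem x hx =>
    obtain ⟨j, hj⟩ := hs x hx
    by_cases hij : j = i
    · subst hij
      rw [decompose_of_mem_same ℳ hj]
      exact Submodule.subset_span hx
    · rw [decompose_of_mem_ne ℳ hj hij]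
      exact zero_mem _
  | zero => simp
  | add a b _ _ ha hb => simpa using add_mem ha hb
  | smul c a _ ha =>
    rw [decompose_smul]
    exact Submodule.smul_mem _ c ha

end Module

section Lie

variable {ι R L : Type*} [DecidableEq ι] [CommRing R] [LieRing L] [LieAlgebra R L]
  {𝒜 : ι → Submodule R L} [Decomposition 𝒜]

theorem LieIdeal.isHomogeneous_inf {I J : LieIdeal R L} (hI : SetLike.IsHomogeneous 𝒜 I)
    (hJ : SetLike.IsHomogeneous 𝒜 J) : SetLike.IsHomogeneous 𝒜 (I ⊓ J) :=
  fun i _ hy ↦ ⟨hI i hy.1, hJ i hy.2⟩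

theorem LieIdeal.lie_eq_span_lie_homogeneous {I J : LieIdeal R L}
    (hI : SetLike.IsHomogeneous 𝒜 I) (hJ : SetLike.IsHomogeneous 𝒜 J) :
    (⁅I, J⁆ : LieIdeal R L).toSubmodule = Submodule.span R
      {z | ∃ x ∈ I, ∃ y ∈ J, SetLike.IsHomogeneousElem 𝒜 x ∧ SetLike.IsHomogeneousElem 𝒜 y ∧
        ⁅x, y⁆ = z} := by
  classical
  rw [LieSubmodule.lieIdeal_oper_eq_linear_span']
  refine le_antisymm (Submodule.span_le.2 ?_) (Submodule.span_mono ?_)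
  · rintro _ ⟨x, hx, y, hy, rfl⟩
    rw [SetLike.mem_coe, ← sum_support_decompose 𝒜 x, ← sum_support_decompose 𝒜 y, sum_lie_sum]
    refine Submodule.sum_mem _ fun i _ ↦ Submodule.sum_mem _ fun j _ ↦ Submodule.subset_span ?_
    exact ⟨_, hI i hx, _, hJ j hy, ⟨i, (decompose 𝒜 x i).2⟩, ⟨j, (decompose 𝒜 y j).2⟩, rfl⟩
  · rintro _ ⟨x, hx, y, hy, -, -, rfl⟩
    exact ⟨x, hx, y, hy, rfl⟩

theorem LieIdeal.isHomogeneous_lie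
    (hbracket : ∀ x y : L, SetLike.IsHomogeneousElem 𝒜 x → SetLike.IsHomogeneousElem 𝒜 y →
      SetLike.IsHomogeneousElem 𝒜 ⁅x, y⁆)
    {I J : LieIdeal R L} (hI : SetLike.IsHomogeneous 𝒜 I) (hJ : SetLike.IsHomogeneous 𝒜 J) :
    SetLike.IsHomogeneous 𝒜 ⁅I, J⁆ := by
  show SetLike.IsHomogeneous 𝒜 (⁅I, J⁆ : LieIdeal R L).toSubmodule
  rw [lie_eq_span_lie_homogeneous hI hJ]
  exact Submodule.isHomogeneous_span fun _ ⟨x, _, y, _, hx, hy, hxy⟩ ↦ hxy ▸ hbracket x y hx hy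

theorem LieIdeal.lie_inf_lie_inf_le (I K : LieIdeal R L) : ⁅I ⊓ K, I ⊓ K⁆ ≤ ⁅I, I⁆ ⊓ K :=
  le_inf (LieSubmodule.mono_lie inf_le_left inf_le_left)
    ((LieSubmodule.lie_le_right _ _).trans inf_le_right)

end Lie

/-- Let `L = ⊕_{σ∈G} L_σ` be a graded semiprime `G`-graded Lie
algebra and let `I` be a graded essential ideal of `L`.  Then the ideal
`I² = ⁅I, I⁆` is also a graded essential ideal of `L`. -/
theorem bracket_of_graded_essential_is_graded_essential
    {Φ : Type*} [CommRing Φ] {G : Type*} [CommGroup G] [DecidableEq G]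
    {L : Type*} [LieRing L] [LieAlgebra Φ L]
    (𝒜 : G → Submodule Φ L) [DirectSum.Decomposition 𝒜]
    (hbracket : ∀ (σ τ : G) (x y : L), x ∈ 𝒜 σ → y ∈ 𝒜 τ → ⁅x, y⁆ ∈ 𝒜 (σ * τ))
    (hsemiprime : ∀ J : LieIdeal Φ L,
      (∀ y ∈ J, ∀ σ : G, (DirectSum.decompose 𝒜 y σ : L) ∈ J) →
      J ≠ ⊥ → ⁅J, J⁆ ≠ (⊥ : LieIdeal Φ L))
    (I : LieIdeal Φ L)
    (hIgr : ∀ y ∈ I, ∀ σ : G, (DirectSum.decompose 𝒜 y σ : L) ∈ I)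
    (hIess : ∀ K : LieIdeal Φ L,
      (∀ y ∈ K, ∀ σ : G, (DirectSum.decompose 𝒜 y σ : L) ∈ K) →
      K ≠ ⊥ → I ⊓ K ≠ ⊥) :
    (∀ y ∈ (⁅I, I⁆ : LieIdeal Φ L), ∀ σ : G,
        (DirectSum.decompose 𝒜 y σ : L) ∈ (⁅I, I⁆ : LieIdeal Φ L)) ∧
    (∀ K : LieIdeal Φ L,
      (∀ y ∈ K, ∀ σ : G, (DirectSum.decompose 𝒜 y σ : L) ∈ K) →
      K ≠ ⊥ → (⁅I, I⁆ : LieIdeal Φ L) ⊓ K ≠ ⊥) := by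
  have hIhom : SetLike.IsHomogeneous 𝒜 I := fun σ y hy ↦ hIgr y hy σ
  have hbracket' : ∀ x y : L, SetLike.IsHomogeneousElem 𝒜 x → SetLike.IsHomogeneousElem 𝒜 y →
      SetLike.IsHomogeneousElem 𝒜 ⁅x, y⁆ :=
    fun x y ⟨σ, hx⟩ ⟨τ, hy⟩ ↦ ⟨σ * τ, hbracket σ τ x y hx hy⟩
  refine ⟨fun y hy σ ↦ LieIdeal.isHomogeneous_lie hbracket' hIhom hIhom σ hy, ?_⟩
  intro K hKgr hK hIIK
  have hIKhom : SetLike.IsHomogeneous 𝒜 (I ⊓ K) :=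
    LieIdeal.isHomogeneous_inf hIhom fun σ y hy ↦ hKgr y hy σ
  refine hsemiprime (I ⊓ K) (fun y hy σ ↦ hIKhom σ hy) (hIess K hKgr hK) ?_
  exact eq_bot_iff.2 (hIIK ▸ LieIdeal.lie_inf_lie_inf_le I K)
end

section
/- Let L be a graded subalgebra of a G-graded Lie algebra Q = ⊕_{σ∈G} Q_σ. Then the following two conditions are equivalent: (i) for every nonzero homogeneous p_σ ∈ Q_σ and every homogeneous q_τ ∈ Q_τ there exists a homogeneous element x_α ∈ L_α such that [x_α, p_σ] ≠ 0 and [x_α, _L(q_τ)] ⊆ L; (ii) Q is graded ideally absorbed into L, i.e., for every nonzero homogeneous q_τ ∈ Q_τ there exists a nonzero graded ideal I of L with Ann_L(I) = 0 and 0 ≠ [I, q_τ] ⊆ L. -/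
/-- The set of iterated adjoint actions of elements of the subalgebra `L` on `q`,
i.e. `q` together with all elements `ad x₁ ⋯ ad xₙ (q)` with `x₁, …, xₙ ∈ L`. -/
inductive AdOrbit {Φ : Type*} [CommRing Φ] {Q : Type*} [LieRing Q] [LieAlgebra Φ Q]
    (L : LieSubalgebra Φ Q) (q : Q) : Q → Prop
  | base : AdOrbit L q q
  | step (x : Q) (hx : x ∈ L) {y : Q} (hy : AdOrbit L q y) : AdOrbit L q ⁅x, y⁆

/-- `_L(q)`: the `Φ`-linear span in `Q` of `q` together with all elements
`ad x₁ ⋯ ad xₙ (q)` with `x₁, …, xₙ ∈ L`. -/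
def lSpan (Φ : Type*) [CommRing Φ] {Q : Type*} [LieRing Q] [LieAlgebra Φ Q]
    (L : LieSubalgebra Φ Q) (q : Q) : Submodule Φ Q :=
  Submodule.span Φ {y | AdOrbit L q y}

/-!
For homogeneous `q`, the elements `x ∈ L` with `⁅x, _L(q)⁆ ⊆ L` form an ideal `(L : q)` of `L`,
which is graded because `_L(q)` is a graded `L`-submodule of `Q`. Condition (i) says that the
homogeneous elements of `(L : q)` detect every nonzero homogeneous element of `Q`, which forces
`Ann_L (L : q) = 0`; so `(L : q)` witnesses (ii).

Conversely, let `I` be an ideal given by (ii) for `q`. The Leibniz rule gives `⁅I, _L(q)⁆ ⊆ L`.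
Given `p ≠ 0`, (ii) for `p` yields `y ∈ L` with `0 ≠ ⁅y, p⁆ ∈ L`; if `I` centralized `p`, the Jacobi
identity would make `⁅y, p⁆` centralize `I`, so `⁅y, p⁆ = 0`. Hence some element of `I`, and then
one of its homogeneous components, does not centralize `p`.
-/

open DirectSum

section Decomposition

variable {ι R M : Type*} [DecidableEq ι] [Semiring R] [AddCommMonoid M] [Module R M]
  (ℳ : ι → Submodule R M) [Decomposition ℳ]

theorem DirectSum.decompose_map_of_mapsTo_mul [Mul ι] [IsLeftCancelMul ι] {f : M →ₗ[R] M}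
    {γ : ι} (hf : ∀ β, ∀ y ∈ ℳ β, f y ∈ ℳ (γ * β)) (x : M) (σ : ι) :
    (decompose ℳ (f x) (γ * σ) : M) = f (decompose ℳ x σ) := by
  induction x using Decomposition.inductionOn ℳ with
  | zero => simp
  | homogeneous m =>
    rename_i β
    by_cases hβ : β = σ
    · subst hβ
      rw [decompose_of_mem_same ℳ (hf β m m.2), decompose_of_mem_same ℳ m.2]
    · rw [decompose_of_mem_ne ℳ (hf β m m.2) (mul_left_cancel.mt hβ),
        decompose_of_mem_ne ℳ m.2 hβ, map_zero]
  | add m m' hm hm' =>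
    simp only [map_add, decompose_add, DirectSum.add_apply, Submodule.coe_add, hm, hm']

theorem DirectSum.exists_decompose_ne_zero {x : M} (hx : x ≠ 0) :
    ∃ σ, (decompose ℳ x σ : M) ≠ 0 := by
  by_contra! h
  exact hx ((decompose ℳ).injective (by ext σ; simp [h σ]))

def Submodule.componentwise (p : Submodule R M) : Submodule R M where
  carrier := {m | ∀ i, (decompose ℳ m i : M) ∈ p}
  add_mem' ha hb i := by
    simpa only [decompose_add, DirectSum.add_apply, Submodule.coe_add] using p.add_mem (ha i) (hb i)
  zero_mem' i := by simp
  smul_mem' c m hm i := by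
    simpa only [decompose_smul, DirectSum.smul_apply, Submodule.coe_smul] using p.smul_mem c (hm i)

end Decomposition

section LieSubalgebra

variable {Φ Q : Type*} [CommRing Φ] [LieRing Q] [LieAlgebra Φ Q]

theorem lie_mem_swap {S : Type*} [SetLike S Q] [NegMemClass S Q] (s : S) {x y : Q} :
    ⁅x, y⁆ ∈ s ↔ ⁅y, x⁆ ∈ s := by
  rw [← lie_skew, neg_mem_iff]

variable (L : LieSubalgebra Φ Q)

theorem mem_lSpan_self (q : Q) : q ∈ lSpan Φ L q :=
  Submodule.subset_span AdOrbit.base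

theorem lie_mem_lSpan {q x m : Q} (hx : x ∈ L) (hm : m ∈ lSpan Φ L q) :
    ⁅x, m⁆ ∈ lSpan Φ L q := by
  induction hm using Submodule.span_induction with
  | mem y hy => exact Submodule.subset_span (AdOrbit.step x hx hy)
  | zero => simp
  | add a b _ _ ha hb => rw [lie_add]; exact add_mem ha hb
  | smul c a _ ha => rw [lie_smul]; exact Submodule.smul_mem _ c ha

theorem lSpan_le {q : Q} {S : Submodule Φ Q} (hq : q ∈ S)
    (hS : ∀ x ∈ L, ∀ m ∈ S, ⁅x, m⁆ ∈ S) : lSpan Φ L q ≤ S := by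
  rw [lSpan, Submodule.span_le]
  intro y hy
  induction hy with
  | base => exact hq
  | step x hx _ ih => exact hS x hx _ ih

theorem lSpan_zero : lSpan Φ L 0 = ⊥ :=
  eq_bot_iff.2 <| lSpan_le L (zero_mem _) fun x _ m hm => by
    rw [(Submodule.mem_bot Φ).1 hm, lie_zero]
    exact zero_mem _

def LieSubalgebra.conductor (S : Submodule Φ Q) : Submodule Φ Q where
  carrier := {x | x ∈ L ∧ ∀ m ∈ S, ⁅x, m⁆ ∈ L}
  add_mem' ha hb :=
    ⟨add_mem ha.1 hb.1, fun m hm => by rw [add_lie]; exact add_mem (ha.2 m hm) (hb.2 m hm)⟩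
  zero_mem' := ⟨zero_mem L, fun m _ => by rw [zero_lie]; exact zero_mem L⟩
  smul_mem' c _ ha :=
    ⟨L.smul_mem c ha.1, fun m hm => by rw [smul_lie]; exact L.smul_mem c (ha.2 m hm)⟩

theorem LieSubalgebra.mem_conductor {S : Submodule Φ Q} {x : Q} :
    x ∈ L.conductor S ↔ x ∈ L ∧ ∀ m ∈ S, ⁅x, m⁆ ∈ L :=
  Iff.rfl

theorem LieSubalgebra.conductor_le (S : Submodule Φ Q) : L.conductor S ≤ L.toSubmodule :=
  fun _ hx => hx.1

theorem LieSubalgebra.lie_mem_conductor {S : Submodule Φ Q} (hS : ∀ x ∈ L, ∀ m ∈ S, ⁅x, m⁆ ∈ S)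
    {x y : Q} (hx : x ∈ L) (hy : y ∈ L.conductor S) : ⁅x, y⁆ ∈ L.conductor S := by
  refine ⟨L.lie_mem hx hy.1, fun m hm => ?_⟩
  rw [lie_lie]
  exact sub_mem (L.lie_mem hx (hy.2 m hm)) (hy.2 _ (hS x hx m hm))

theorem lie_mem_of_mem_lSpan {I : Submodule Φ Q} (hI : ∀ x ∈ L, ∀ y ∈ I, ⁅x, y⁆ ∈ I) {q : Q}
    (hIq : ∀ z ∈ I, ⁅z, q⁆ ∈ L) {z m : Q} (hz : z ∈ I) (hm : m ∈ lSpan Φ L q) : ⁅z, m⁆ ∈ L := by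
  have mem_iff {m : Q} : m ∈ ⨅ z ∈ I, L.toSubmodule.comap (LieAlgebra.ad Φ Q z) ↔
      ∀ z ∈ I, ⁅z, m⁆ ∈ L := by
    simp only [Submodule.mem_iInf, Submodule.mem_comap, LieAlgebra.ad_apply,
      LieSubalgebra.mem_toSubmodule]
  suffices lSpan Φ L q ≤ ⨅ z ∈ I, L.toSubmodule.comap (LieAlgebra.ad Φ Q z) from
    mem_iff.1 (this hm) z hz
  refine lSpan_le L (mem_iff.2 hIq) fun x hx m hm => mem_iff.2 fun z hz => ?_
  rw [leibniz_lie]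
  exact add_mem (mem_iff.1 hm _ ((lie_mem_swap I).1 (hI x hx z hz)))
    (L.lie_mem hx (mem_iff.1 hm z hz))

theorem exists_lie_ne_zero_of_annihilator_eq_zero {I : Submodule Φ Q}
    (hI : ∀ x ∈ L, ∀ y ∈ I, ⁅x, y⁆ ∈ I) (hIann : ∀ x ∈ L, (∀ y ∈ I, ⁅x, y⁆ = 0) → x = 0)
    {y p : Q} (hy : y ∈ L) (hyp : ⁅y, p⁆ ∈ L) (hyp0 : ⁅y, p⁆ ≠ 0) : ∃ z ∈ I, ⁅z, p⁆ ≠ 0 := by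
  by_contra! hIp
  refine hyp0 (hIann _ hyp fun z hz => ?_)
  have hzy : ⁅z, y⁆ ∈ I := (lie_mem_swap I).1 (hI y hy z hz)
  rw [← lie_skew, leibniz_lie, hIp z hz, lie_zero, hIp _ hzy, zero_add, neg_zero]

end LieSubalgebra

section GradedLie

def IsLieGrading {Φ G Q : Type*} [CommRing Φ] [Mul G] [LieRing Q] [LieAlgebra Φ Q]
    (𝒜 : G → Submodule Φ Q) : Prop :=
  ∀ (σ τ : G) (x y : Q), x ∈ 𝒜 σ → y ∈ 𝒜 τ → ⁅x, y⁆ ∈ 𝒜 (σ * τ)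

variable {Φ G Q : Type*} [CommRing Φ] [DecidableEq G] [LieRing Q] [LieAlgebra Φ Q]
  {𝒜 : G → Submodule Φ Q} [Decomposition 𝒜]

theorem lie_decompose_of_mem [Mul G] [IsLeftCancelMul G] (h𝒜 : IsLieGrading 𝒜) {z : Q} {γ : G}
    (hz : z ∈ 𝒜 γ) (x : Q) (σ : G) :
    ⁅z, (decompose 𝒜 x σ : Q)⁆ = decompose 𝒜 ⁅z, x⁆ (γ * σ) :=
  (decompose_map_of_mapsTo_mul 𝒜 (f := LieAlgebra.ad Φ Q z)
    (fun β y hy => h𝒜 γ β z y hz hy) x σ).symm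

theorem lie_decompose_mem_of_lie_mem [Mul G] [IsLeftCancelMul G] (h𝒜 : IsLieGrading 𝒜)
    {L : LieSubalgebra Φ Q} (hL : SetLike.IsHomogeneous 𝒜 L) {z x : Q} {γ : G} (hz : z ∈ 𝒜 γ)
    (hzx : ⁅z, x⁆ ∈ L) (σ : G) : ⁅z, (decompose 𝒜 x σ : Q)⁆ ∈ L := by
  rw [lie_decompose_of_mem h𝒜 hz]
  exact hL _ hzx

variable (𝒜) in
theorem exists_decompose_lie_ne_zero {y p : Q} (h : ⁅y, p⁆ ≠ 0) :
    ∃ α, ⁅(decompose 𝒜 y α : Q), p⁆ ≠ 0 := by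
  classical
  by_contra! hc
  rw [← sum_support_decompose 𝒜 y, sum_lie] at h
  exact h (Finset.sum_eq_zero fun α _ => hc α)

theorem eq_zero_of_forall_lie_eq_zero [Mul G] [IsLeftCancelMul G] (h𝒜 : IsLieGrading 𝒜)
    {I : Submodule Φ Q}
    (hI : ∀ (σ : G) (p : Q), p ∈ 𝒜 σ → p ≠ 0 → ∃ α, ∃ z ∈ 𝒜 α, z ∈ I ∧ ⁅z, p⁆ ≠ 0)
    {x : Q} (hx : ∀ y ∈ I, ⁅x, y⁆ = 0) : x = 0 := by
  by_contra hx0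
  obtain ⟨σ, hσ⟩ := exists_decompose_ne_zero 𝒜 hx0
  obtain ⟨α, z, hzα, hzI, hz⟩ := hI σ _ (decompose 𝒜 x σ).2 hσ
  have hzx : ⁅z, x⁆ = 0 := by rw [← lie_skew, hx z hzI, neg_zero]
  exact hz (by rw [lie_decompose_of_mem h𝒜 hzα, hzx]; simp)

variable (L : LieSubalgebra Φ Q)

theorem isHomogeneous_lSpan [Group G] (h𝒜 : IsLieGrading 𝒜) (hL : SetLike.IsHomogeneous 𝒜 L)
    {q : Q} {τ : G} (hq : q ∈ 𝒜 τ) : SetLike.IsHomogeneous 𝒜 (lSpan Φ L q) := by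
  suffices lSpan Φ L q ≤ (lSpan Φ L q).componentwise 𝒜 from fun σ m hm => this hm σ
  refine lSpan_le L (fun σ => ?_) fun x hx m hm σ => ?_
  · by_cases h : τ = σ
    · subst h
      rw [decompose_of_mem_same 𝒜 hq]
      exact mem_lSpan_self L q
    · rw [decompose_of_mem_ne 𝒜 hq h]
      exact zero_mem _
  · classical
    rw [← sum_support_decompose 𝒜 x, sum_lie, decompose_sum, DirectSum.sum_apply,
      Submodule.coe_sum]
    refine Submodule.sum_mem _ fun α _ => ?_
    -- the `σ`-component of `⁅x_α, m⁆` is `⁅x_α, m_{α⁻¹σ}⁆`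
    rw [← mul_inv_cancel_left α σ, ← lie_decompose_of_mem h𝒜 (decompose 𝒜 x α).2]
    exact lie_mem_lSpan L (hL α hx) (hm _)

theorem LieSubalgebra.isHomogeneous_conductor [Mul G] [IsLeftCancelMul G]
    (h𝒜 : IsLieGrading 𝒜) (hL : SetLike.IsHomogeneous 𝒜 L) {S : Submodule Φ Q}
    (hS : SetLike.IsHomogeneous 𝒜 S) : SetLike.IsHomogeneous 𝒜 (L.conductor S) := by
  classical
  intro σ y hy
  refine ⟨hL σ hy.1, fun m hm => ?_⟩
  rw [← sum_support_decompose 𝒜 m, lie_sum]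
  refine sum_mem fun β _ => (lie_mem_swap L).2 ?_
  exact lie_decompose_mem_of_lie_mem h𝒜 hL (decompose 𝒜 m β).2
    ((lie_mem_swap L).1 (hy.2 _ (hS β hm))) σ

end GradedLie

/-- Let `L` be a graded subalgebra of a `G`-graded Lie algebra
`Q = ⊕_{σ∈G} Q_σ`.  Then the following are equivalent: (i) for every nonzero
homogeneous `p_σ ∈ Q_σ` and every homogeneous `q_τ ∈ Q_τ` there is a homogeneous
`x_α ∈ L_α` with `⁅x_α, p_σ⁆ ≠ 0` and `⁅x_α, _L(q_τ)⁆ ⊆ L`; (ii) `Q` is graded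
ideally absorbed into `L`: for every nonzero homogeneous `q_τ ∈ Q_τ` there is a
nonzero graded ideal `I` of `L` with `Ann_L(I) = 0` and `0 ≠ ⁅I, q_τ⁆ ⊆ L`. -/
theorem graded_algebra_of_quotients_iff_graded_ideally_absorbed
    {Φ : Type*} [CommRing Φ] {G : Type*} [CommGroup G] [DecidableEq G]
    {Q : Type*} [LieRing Q] [LieAlgebra Φ Q]
    (𝒜 : G → Submodule Φ Q) [DirectSum.Decomposition 𝒜]
    (hbracket : ∀ (σ τ : G) (x y : Q), x ∈ 𝒜 σ → y ∈ 𝒜 τ → ⁅x, y⁆ ∈ 𝒜 (σ * τ))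
    (L : LieSubalgebra Φ Q)
    (hLgr : ∀ x ∈ L, ∀ σ : G, (DirectSum.decompose 𝒜 x σ : Q) ∈ L) :
    (∀ (σ τ : G) (p q : Q), p ∈ 𝒜 σ → p ≠ 0 → q ∈ 𝒜 τ →
       ∃ (α : G) (x : Q), x ∈ 𝒜 α ∧ x ∈ L ∧ ⁅x, p⁆ ≠ 0 ∧
         ∀ y ∈ lSpan Φ L q, ⁅x, y⁆ ∈ L) ↔
    (∀ (τ : G) (q : Q), q ∈ 𝒜 τ → q ≠ 0 →
       ∃ I : Submodule Φ Q, I ≤ L.toSubmodule ∧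
         (∀ x ∈ L, ∀ y ∈ I, ⁅x, y⁆ ∈ I) ∧
         (∀ y ∈ I, ∀ σ : G, (DirectSum.decompose 𝒜 y σ : Q) ∈ I) ∧
         I ≠ ⊥ ∧
         (∀ x ∈ L, (∀ y ∈ I, ⁅x, y⁆ = 0) → x = 0) ∧
         (∃ y ∈ I, ⁅y, q⁆ ≠ 0) ∧ (∀ y ∈ I, ⁅y, q⁆ ∈ L)) := by
  have hL : SetLike.IsHomogeneous 𝒜 L := fun σ x hx => hLgr x hx σ
  refine ⟨fun h τ q hq hq0 => ?_, fun h σ τ p q hp hp0 hq => ?_⟩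
  · have hdetect (σ : G) (p : Q) (hp : p ∈ 𝒜 σ) (hp0 : p ≠ 0) :
        ∃ α, ∃ x ∈ 𝒜 α, x ∈ L.conductor (lSpan Φ L q) ∧ ⁅x, p⁆ ≠ 0 :=
      let ⟨α, x, hxα, hxL, hxp, hx⟩ := h σ τ p q hp hp0 hq
      ⟨α, x, hxα, L.mem_conductor.2 ⟨hxL, hx⟩, hxp⟩
    obtain ⟨-, x, -, hx, hxq⟩ := hdetect τ q hq hq0
    refine ⟨L.conductor (lSpan Φ L q), L.conductor_le _,
      fun x hx y hy => L.lie_mem_conductor (fun _ hx _ => lie_mem_lSpan L hx) hx hy,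
      fun y hy σ => L.isHomogeneous_conductor hbracket hL
        (isHomogeneous_lSpan L hbracket hL hq) σ hy,
      (Submodule.ne_bot_iff _).2 ⟨x, hx, by rintro rfl; simp at hxq⟩,
      fun x _ hx => eq_zero_of_forall_lie_eq_zero hbracket hdetect hx,
      ⟨x, hx, hxq⟩, fun y hy => (L.mem_conductor.1 hy).2 q (mem_lSpan_self L q)⟩
  · obtain ⟨J, hJL, -, hJ, -, -, ⟨y, hyJ, hyp⟩, hJp⟩ := h σ p hp hp0
    -- `K` is `J` if `q = 0` (then `_L(q) = 0`), and the ideal that (ii) gives for `q` otherwise.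
    obtain ⟨K, hKL, hK, ⟨z, hzK, hzp⟩, hKq⟩ : ∃ K : Submodule Φ Q, K ≤ L.toSubmodule ∧
        SetLike.IsHomogeneous 𝒜 K ∧ (∃ z ∈ K, ⁅z, p⁆ ≠ 0) ∧
        ∀ z ∈ K, ∀ m ∈ lSpan Φ L q, ⁅z, m⁆ ∈ L := by
      rcases eq_or_ne q 0 with rfl | hq0
      · refine ⟨J, hJL, fun σ y hy => hJ y hy σ, ⟨y, hyJ, hyp⟩, fun z _ m hm => ?_⟩
        rw [lSpan_zero, Submodule.mem_bot] at hm
        simp [hm]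
      · obtain ⟨I, hIL, hI, hIgr, -, hIann, -, hIq⟩ := h τ q hq hq0
        exact ⟨I, hIL, fun σ y hy => hIgr y hy σ,
          exists_lie_ne_zero_of_annihilator_eq_zero L hI hIann (hJL hyJ) (hJp y hyJ) hyp,
          fun z hz m hm => lie_mem_of_mem_lSpan L hI hIq hz hm⟩
    obtain ⟨α, hα⟩ := exists_decompose_lie_ne_zero 𝒜 hzp
    exact ⟨α, _, (decompose 𝒜 z α).2, hKL (hK α hzK), hα, hKq _ (hK α hzK)⟩
end

section
/- Let Φ be a unital commutative ring which is 2-torsion free and 3-torsion free, and let Q = ⊕_{σ∈G} Q_σ be a G-graded Lie algebra over Φ which is a graded weak algebra of quotients of a graded subalgebra L. If L is graded strongly nondegenerate, then Q is graded strongly nondegenerate. -/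
/-!
An absolute zero divisor `p` of a Lie ring without 2-torsion is a sandwich: `D = ad p` satisfies
`D * D = 0` and `D * ad z * D = 0` for all `z`. For `a = ⁅x, p⁆` this gives
`ad a * ad a = -M` with `M = D * X * X * D` (`X = ad x`), and `ad ⁅a, ⁅a, y⁆⁆ ^ 2 = M * Y * Y * M`
as soon as `M * Y * ad a = ad a * Y * M = 0` (`Y = ad y`). Sandwiching `ad ⁅x, ⁅x, ⁅x, ⁅x, p⁆⁆⁆⁆`
gives `6 • (D * X * X * D * X * X * D) = 0`, which makes `b = ⁅a, ⁅a, x⁆⁆` an absolute zero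
divisor. Once `b = 0`, multiplying the expansion of `ad b` by `D * Y` and by `Y * D` gives
`D * Y * X * M = M * X * Y * D = 0`, and sandwiching `ad ⁅y, ⁅y, ⁅x, ⁅x, p⁆⁆⁆⁆` then gives
`M * Y * Y * M = 0`, so every `⁅a, ⁅a, y⁆⁆` is an absolute zero divisor as well.

In the graded setting, take homogeneous `x ∈ L` with `0 ≠ a ∈ L`. Strong nondegeneracy of `L`
kills `b`, then `⁅a, ⁅a, y⁆⁆` for every homogeneous `y ∈ L`; so `a` is an absolute zero divisor
of `L`, hence `a = 0`.
-/

section Ring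

variable {E : Type*} [Ring E] {D X Y : E}

theorem lie_mul_lie_eq_neg (hDD : D * D = 0) (hDXD : D * X * D = 0) :
    ⁅X, D⁆ * ⁅X, D⁆ = -(D * X * X * D) := by
  calc ⁅X, D⁆ * ⁅X, D⁆ = X * (D * X * D) - X * (D * D) * X - D * X * X * D + D * X * D * X := by
        rw [Ring.lie_def]; noncomm_ring
    _ = -(D * X * X * D) := by rw [hDXD, hDD]; simp

theorem lie_lie_lie_eq (hDD : D * D = 0) (hDXD : D * X * D = 0) :
    ⁅⁅X, D⁆, ⁅⁅X, D⁆, X⁆⁆ =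
      2 • (D * X * X * X * D) - 3 • (D * X * X * D * X) - 3 • (X * D * X * X * D) := by
  calc ⁅⁅X, D⁆, ⁅⁅X, D⁆, X⁆⁆
      = 2 • (D * X * X * X * D) - 3 • (D * X * X * D * X) - 3 • (X * D * X * X * D)
        + 4 • (X * (D * X * D) * X) + D * X * D * X * X + X * X * (D * X * D)
        - X * (D * D) * X * X - X * X * (D * D) * X := by simp only [Ring.lie_def]; noncomm_ring
    _ = _ := by rw [hDXD, hDD]; simp

theorem mul_lie_lie_lie_lie_mul_eq (hDD : D * D = 0) (hDXD : D * X * D = 0) (hDYD : D * Y * D = 0) :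
    D * ⁅Y, ⁅Y, ⁅X, ⁅X, D⁆⁆⁆⁆ * D =
      D * Y * Y * D * X * X * D + 4 • (D * Y * X * D * X * Y * D) + D * X * X * D * Y * Y * D := by
  calc D * ⁅Y, ⁅Y, ⁅X, ⁅X, D⁆⁆⁆⁆ * D
      = D * Y * Y * D * X * X * D + 4 • (D * Y * X * D * X * Y * D) + D * X * X * D * Y * Y * D
        + D * Y * Y * X * X * (D * D) - 2 • (D * Y * Y * X * (D * X * D))
        - 2 • (D * Y * X * X * (D * Y * D)) - 2 • (D * Y * D * X * X * Y * D)
        - 2 • (D * X * D * X * Y * Y * D) + D * D * X * X * Y * Y * D := by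
        simp only [Ring.lie_def]; noncomm_ring
    _ = _ := by rw [hDXD, hDYD, hDD]; simp

theorem lie_lie_sq_eq (hDD : D * D = 0) (hDXD : D * X * D = 0) (hDYD : D * Y * D = 0)
    (hMYA : D * X * X * D * Y * ⁅X, D⁆ = 0) (hAYM : ⁅X, D⁆ * Y * (D * X * X * D) = 0) :
    ⁅⁅X, D⁆, ⁅⁅X, D⁆, Y⁆⁆ ^ 2 = D * X * X * D * Y * Y * (D * X * X * D) := by
  have hAA : ⁅X, D⁆ * ⁅X, D⁆ = -(D * X * X * D) := lie_mul_lie_eq_neg hDD hDXD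
  have hAM : ⁅X, D⁆ * (D * X * X * D) = 0 := by
    calc ⁅X, D⁆ * (D * X * X * D) = X * (D * D) * X * X * D - D * X * D * X * X * D := by
          rw [Ring.lie_def]; noncomm_ring
      _ = 0 := by rw [hDD, hDXD]; simp
  have hMA : D * X * X * D * ⁅X, D⁆ = 0 := by
    calc D * X * X * D * ⁅X, D⁆ = D * X * X * (D * X * D) - D * X * X * (D * D) * X := by
          rw [Ring.lie_def]; noncomm_ring
      _ = 0 := by rw [hDD, hDXD]; simp
  have hMYM : D * X * X * D * Y * (D * X * X * D) = 0 := by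
    calc D * X * X * D * Y * (D * X * X * D) = D * X * X * (D * Y * D) * X * X * D := by
          noncomm_ring
      _ = 0 := by rw [hDYD]; simp
  have hMM : D * X * X * D * (D * X * X * D) = 0 := by
    calc D * X * X * D * (D * X * X * D) = D * X * X * (D * D) * X * X * D := by noncomm_ring
      _ = 0 := by rw [hDD]; simp
  set A := ⁅X, D⁆
  set M := D * X * X * D
  calc ⁅A, ⁅A, Y⁆⁆ ^ 2 = (A * A * Y - 2 • (A * Y * A) + Y * (A * A)) ^ 2 := by
        simp only [Ring.lie_def A]; noncomm_ring
    _ = (M * Y + 2 • (A * Y * A) + Y * M) ^ 2 := by rw [hAA]; noncomm_ring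
    _ = M * Y * Y * M + M * Y * M * Y + 2 • (M * Y * A * Y * A) + 2 • (A * Y * (A * M) * Y)
        + 4 • (A * Y * (A * A) * Y * A) + 2 • (A * Y * (A * Y * M)) + Y * (M * M) * Y
        + 2 • (Y * (M * A) * Y * A) + Y * (M * Y * M) := by noncomm_ring
    _ = M * Y * Y * M := by
        rw [hAA, mul_neg, neg_mul]
        simp [hMYM, hMYA, hAM, hAYM, hMA, hMM]

end Ring

theorem Module.End.eq_zero_of_nsmul {R M : Type*} [Semiring R] [AddCommMonoid M] [Module R M]
    {n : ℕ} (hn : ∀ q : M, n • q = 0 → q = 0) {f : Module.End R M} (hf : n • f = 0) : f = 0 :=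
  LinearMap.ext fun q => hn _ (by rw [← LinearMap.smul_apply, hf, LinearMap.zero_apply])

def IsAbsoluteZeroDivisor {L : Type*} [LieRing L] (x : L) : Prop :=
  ∀ y : L, ⁅x, ⁅x, y⁆⁆ = 0

open LieAlgebra

section Lie

variable {L : Type*} [LieRing L]

theorem isAbsoluteZeroDivisor_of_ad_sq {b : L} (hb : ad ℤ L b ^ 2 = 0) :
    IsAbsoluteZeroDivisor b :=
  fun t => by simpa [sq] using LinearMap.congr_fun hb t

namespace IsAbsoluteZeroDivisor

variable {p : L} (hp : IsAbsoluteZeroDivisor p)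
include hp

theorem ad_mul_self : ad ℤ L p * ad ℤ L p = 0 :=
  LinearMap.ext hp

theorem lie_lie_lie_eq_zero (h2 : ∀ q : L, (2 : ℕ) • q = 0 → q = 0) (m n : L) :
    ⁅⁅p, m⁆, ⁅p, n⁆⁆ = 0 := by
  apply h2
  have h := hp ⁅m, n⁆
  rw [leibniz_lie p m n, lie_add, leibniz_lie p, leibniz_lie p m, hp, hp, zero_lie, lie_zero] at h
  rw [← h]; abel

theorem ad_mul_ad_mul_ad (h2 : ∀ q : L, (2 : ℕ) • q = 0 → q = 0) (z : L) :
    ad ℤ L p * ad ℤ L z * ad ℤ L p = 0 := by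
  ext s
  simp [leibniz_lie p z, hp.lie_lie_lie_eq_zero h2, hp s]

variable (h2 : ∀ q : L, (2 : ℕ) • q = 0 → q = 0) (h3 : ∀ q : L, (3 : ℕ) • q = 0 → q = 0)
include h2 h3

theorem ad_mul_ad_sq_mul_ad_mul_ad_sq_mul_ad (x : L) :
    ad ℤ L p * ad ℤ L x * ad ℤ L x * ad ℤ L p * ad ℤ L x * ad ℤ L x * ad ℤ L p = 0 := by
  have h6 : ∀ q : L, (6 : ℕ) • q = 0 → q = 0 := fun q hq =>
    h3 q (h2 _ (by rw [smul_smul]; exact hq))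
  apply Module.End.eq_zero_of_nsmul h6
  have h := hp.ad_mul_ad_mul_ad h2 ⁅x, ⁅x, ⁅x, ⁅x, p⁆⁆⁆⁆
  simp only [LieHom.map_lie] at h
  rw [mul_lie_lie_lie_lie_mul_eq hp.ad_mul_self
    (hp.ad_mul_ad_mul_ad h2 x) (hp.ad_mul_ad_mul_ad h2 x)] at h
  rw [← h]; abel

theorem lie_lie_lie_lie_self (x : L) : IsAbsoluteZeroDivisor ⁅⁅x, p⁆, ⁅⁅x, p⁆, x⁆⁆ := by
  apply isAbsoluteZeroDivisor_of_ad_sq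
  have hDD := hp.ad_mul_self
  have hDXD := hp.ad_mul_ad_mul_ad h2 x
  have hN := hp.ad_mul_ad_sq_mul_ad_mul_ad_sq_mul_ad h2 h3 x
  simp only [LieHom.map_lie]
  set D := ad ℤ L p
  set X := ad ℤ L x
  rw [lie_lie_sq_eq hDD hDXD hDXD]
  · calc D * X * X * D * X * X * (D * X * X * D) = D * X * X * D * X * X * D * X * X * D := by
          noncomm_ring
      _ = 0 := by rw [hN]; simp
  · calc D * X * X * D * X * ⁅X, D⁆ = D * X * X * D * X * X * D - D * X * X * (D * X * D) * X := by
          rw [Ring.lie_def]; noncomm_ring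
      _ = 0 := by rw [hN, hDXD]; simp
  · calc ⁅X, D⁆ * X * (D * X * X * D)
        = X * (D * X * D) * X * X * D - D * X * X * D * X * X * D := by
          rw [Ring.lie_def]; noncomm_ring
      _ = 0 := by rw [hN, hDXD]; simp

theorem lie_lie_lie_lie_of_self_eq_zero {x : L} (hb : ⁅⁅x, p⁆, ⁅⁅x, p⁆, x⁆⁆ = 0) (y : L) :
    IsAbsoluteZeroDivisor ⁅⁅x, p⁆, ⁅⁅x, p⁆, y⁆⁆ := by
  apply isAbsoluteZeroDivisor_of_ad_sq
  have hDD := hp.ad_mul_self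
  have hDXD := hp.ad_mul_ad_mul_ad h2 x
  have hDYD := hp.ad_mul_ad_mul_ad h2 y
  have hN := hp.ad_mul_ad_sq_mul_ad_mul_ad_sq_mul_ad h2 h3 x
  have hDYXD := hp.ad_mul_ad_mul_ad h2 ⁅y, x⁆
  have hW := hp.ad_mul_ad_mul_ad h2 ⁅y, ⁅y, ⁅x, ⁅x, p⁆⁆⁆⁆
  have hadb := congrArg (ad ℤ L) hb
  simp only [LieHom.map_lie, map_zero] at hDYXD hW hadb ⊢
  set D := ad ℤ L p
  set X := ad ℤ L x
  set Y := ad ℤ L y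
  rw [mul_lie_lie_lie_lie_mul_eq hDD hDXD hDYD] at hW
  rw [lie_lie_lie_eq hDD hDXD] at hadb
  have hMXYD : D * X * X * D * X * Y * D = 0 := by
    refine Module.End.eq_zero_of_nsmul h3 ?_
    calc 3 • (D * X * X * D * X * Y * D)
        = 2 • (D * X * X * X * (D * Y * D)) - 3 • (X * D * X * X * (D * Y * D))
          - (2 • (D * X * X * X * D) - 3 • (D * X * X * D * X) - 3 • (X * D * X * X * D))
            * Y * D := by
          noncomm_ring
      _ = 0 := by rw [hadb, hDYD]; simp
  have hDYXM : D * Y * X * D * X * X * D = 0 := by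
    refine Module.End.eq_zero_of_nsmul h3 ?_
    calc 3 • (D * Y * X * D * X * X * D)
        = 2 • (D * Y * D * X * X * X * D) - 3 • (D * Y * D * X * X * D * X)
          - D * Y
            * (2 • (D * X * X * X * D) - 3 • (D * X * X * D * X) - 3 • (X * D * X * X * D)) := by
          noncomm_ring
      _ = 0 := by rw [hadb, hDYD]; simp
  rw [lie_lie_sq_eq hDD hDXD hDYD]
  · calc D * X * X * D * Y * Y * (D * X * X * D)
        = D * X * X * (D * Y * Y * D * X * X * D + 4 • (D * Y * X * D * X * Y * D)
            + D * X * X * D * Y * Y * D)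
          - 4 • ((D * X * X * D * X * Y * D + D * X * X * (D * ⁅Y, X⁆ * D)) * X * Y * D)
          - D * X * X * D * X * X * D * Y * Y * D := by
          rw [Ring.lie_def]; noncomm_ring
      _ = 0 := by rw [hW, hMXYD, hDYXD, hN]; simp
  · calc D * X * X * D * Y * ⁅X, D⁆
        = D * X * X * D * X * Y * D + D * X * X * (D * ⁅Y, X⁆ * D)
          - D * X * X * (D * Y * D) * X := by
          simp only [Ring.lie_def]; noncomm_ring
      _ = 0 := by rw [hMXYD, hDYXD, hDYD]; simp
  · calc ⁅X, D⁆ * Y * (D * X * X * D)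
        = X * (D * Y * D) * X * X * D - D * Y * X * D * X * X * D + D * ⁅Y, X⁆ * D * X * X * D := by
          simp only [Ring.lie_def]; noncomm_ring
      _ = 0 := by rw [hDYD, hDYXM, hDYXD]; simp

end IsAbsoluteZeroDivisor

end Lie

theorem DirectSum.map_eq_zero_of_forall_homogeneous {ι M N σ F : Type*} [DecidableEq ι]
    [AddCommMonoid M] [AddCommMonoid N] [SetLike σ M] [AddSubmonoidClass σ M] (𝒜 : ι → σ)
    [DirectSum.Decomposition 𝒜] [FunLike F M N] [AddMonoidHomClass F M N] {S : Set M}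
    (hS : ∀ y ∈ S, ∀ i, (DirectSum.decompose 𝒜 y i : M) ∈ S) (f : F)
    (hf : ∀ i, ∀ y ∈ 𝒜 i, y ∈ S → f y = 0) : ∀ y ∈ S, f y = 0 := by
  classical
  intro y hy
  rw [← DirectSum.sum_support_decompose 𝒜 y, map_sum]
  exact Finset.sum_eq_zero fun i _ => hf i _ (SetLike.coe_mem _) (hS y hy i)

/-- Let `Φ` be 2- and 3-torsion free (on the modules under
consideration) and let `Q = ⊕_{σ∈G} Q_σ` be a `G`-graded Lie algebra over `Φ`
which is a graded weak algebra of quotients of a graded subalgebra `L`.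
If `L` is graded strongly nondegenerate, then `Q` is graded strongly
nondegenerate. -/
theorem graded_strongly_nondegenerate_of_graded_weak_quotients
    {Φ : Type*} [CommRing Φ] {G : Type*} [CommGroup G] [DecidableEq G]
    {Q : Type*} [LieRing Q] [LieAlgebra Φ Q]
    (h2 : ∀ q : Q, (2 : ℕ) • q = 0 → q = 0)
    (h3 : ∀ q : Q, (3 : ℕ) • q = 0 → q = 0)
    (𝒜 : G → Submodule Φ Q) [DirectSum.Decomposition 𝒜]
    (hbracket : ∀ (σ τ : G) (x y : Q), x ∈ 𝒜 σ → y ∈ 𝒜 τ → ⁅x, y⁆ ∈ 𝒜 (σ * τ))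
    (L : LieSubalgebra Φ Q)
    (hLgr : ∀ x ∈ L, ∀ σ : G, (DirectSum.decompose 𝒜 x σ : Q) ∈ L)
    (hweak : ∀ (σ : G) (p : Q), p ∈ 𝒜 σ → p ≠ 0 →
      ∃ (α : G) (x : Q), x ∈ 𝒜 α ∧ x ∈ L ∧ ⁅x, p⁆ ≠ 0 ∧ ⁅x, p⁆ ∈ L)
    (hLnd : ∀ (σ : G) (x : Q), x ∈ L → x ∈ 𝒜 σ →
      (∀ y ∈ L, ⁅x, ⁅x, y⁆⁆ = 0) → x = 0) :
    ∀ (σ : G) (x : Q), x ∈ 𝒜 σ → (∀ y : Q, ⁅x, ⁅x, y⁆⁆ = 0) → x = 0 := by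
  intro σ p hpσ (hp : IsAbsoluteZeroDivisor p)
  by_contra hp0
  obtain ⟨α, x, hxα, hxL, ha0, haL⟩ := hweak σ p hpσ hp0
  set a := ⁅x, p⁆
  have haσ : a ∈ 𝒜 (α * σ) := hbracket α σ x p hxα hpσ
  have hLnd_sq : ∀ τ y, y ∈ 𝒜 τ → y ∈ L → IsAbsoluteZeroDivisor ⁅a, ⁅a, y⁆⁆ →
      ⁅a, ⁅a, y⁆⁆ = 0 := fun τ y hyτ hyL hy =>
    hLnd _ _ (L.lie_mem haL (L.lie_mem haL hyL))
      (hbracket _ _ _ _ haσ (hbracket _ _ _ _ haσ hyτ)) fun t _ => hy t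
  have hb := hLnd_sq α x hxα hxL (hp.lie_lie_lie_lie_self h2 h3 x)
  refine ha0 (hLnd _ _ haL haσ ?_)
  exact DirectSum.map_eq_zero_of_forall_homogeneous 𝒜 hLgr (ad ℤ Q a * ad ℤ Q a)
    fun τ y hyτ hyL => hLnd_sq τ y hyτ hyL (hp.lie_lie_lie_lie_of_self_eq_zero h2 h3 hb y)
end

section
/- Let L be a graded subalgebra of a G-graded Lie algebra Q = ⊕_{σ∈G} Q_σ. If Q is a weak algebra of quotients of L (in the non-graded sense), then Q is a graded weak algebra of quotients of L. -/
/-- Let `L` be a graded subalgebra of a `G`-graded Lie algebra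
`Q = ⊕_{σ∈G} Q_σ`.  If `Q` is a weak algebra of quotients of `L` (in the
non-graded sense), then `Q` is a graded weak algebra of quotients of `L`. -/
theorem weak_quotients_implies_graded_weak_quotients
    {Φ : Type*} [CommRing Φ] {G : Type*} [CommGroup G] [DecidableEq G]
    {Q : Type*} [LieRing Q] [LieAlgebra Φ Q]
    (𝒜 : G → Submodule Φ Q) [DirectSum.Decomposition 𝒜]
    (hbracket : ∀ (σ τ : G) (x y : Q), x ∈ 𝒜 σ → y ∈ 𝒜 τ → ⁅x, y⁆ ∈ 𝒜 (σ * τ))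
    (L : LieSubalgebra Φ Q)
    (hLgr : ∀ x ∈ L, ∀ σ : G, (DirectSum.decompose 𝒜 x σ : Q) ∈ L)
    (hweak : ∀ p : Q, p ≠ 0 → ∃ x ∈ L, ⁅x, p⁆ ≠ 0 ∧ ⁅x, p⁆ ∈ L) :
    ∀ (σ : G) (p : Q), p ∈ 𝒜 σ → p ≠ 0 →
      ∃ (α : G) (x : Q), x ∈ 𝒜 α ∧ x ∈ L ∧ ⁅x, p⁆ ≠ 0 ∧ ⁅x, p⁆ ∈ L := by
  classical
  intro σ p hp hp0
  obtain ⟨x, hxL, hne, hbL⟩ := hweak p hp0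
  -- key: component of ⁅x,p⁆ at grade τ is ⁅x_{τσ⁻¹}, p⁆
  have key : ∀ τ : G,
      (DirectSum.decompose 𝒜 ⁅x, p⁆ τ : Q)
        = ⁅(DirectSum.decompose 𝒜 x (τ * σ⁻¹) : Q), p⁆ := by
    intro τ
    conv_lhs => rw [← DirectSum.sum_support_decompose 𝒜 x]
    rw [show ⁅(∑ β ∈ (DirectSum.decompose 𝒜 x).support,
          (DirectSum.decompose 𝒜 x β : Q)), p⁆
        = ∑ β ∈ (DirectSum.decompose 𝒜 x).support,
          ⁅(DirectSum.decompose 𝒜 x β : Q), p⁆ from by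
        exact map_sum (AddMonoidHom.mk' (fun y : Q => ⁅y, p⁆)
          (fun a b => add_lie a b p)) _ _]
    rw [DirectSum.decompose_sum]
    rw [DFinsupp.finset_sum_apply, Submodule.coe_sum]
    have hterm : ∀ β ∈ (DirectSum.decompose 𝒜 x).support,
        (DirectSum.decompose 𝒜 ⁅(DirectSum.decompose 𝒜 x β : Q), p⁆ τ : Q)
          = if β = τ * σ⁻¹ then ⁅(DirectSum.decompose 𝒜 x β : Q), p⁆ else 0 := by
      intro β _
      have hmem : ⁅(DirectSum.decompose 𝒜 x β : Q), p⁆ ∈ 𝒜 (β * σ) :=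
        hbracket β σ _ p (DirectSum.decompose 𝒜 x β).2 hp
      by_cases hβ : β = τ * σ⁻¹
      · subst hβ
        rw [if_pos rfl]
        have : τ * σ⁻¹ * σ = τ := by group
        rw [this] at hmem
        exact DirectSum.decompose_of_mem_same 𝒜 hmem
      · rw [if_neg hβ]
        have hne' : β * σ ≠ τ := fun h => hβ (by rw [← h]; group)
        exact DirectSum.decompose_of_mem_ne 𝒜 hmem hne'
    rw [Finset.sum_congr rfl hterm, Finset.sum_ite_eq' _ (τ * σ⁻¹)]
    by_cases hs : τ * σ⁻¹ ∈ (DirectSum.decompose 𝒜 x).support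
    · rw [if_pos hs]
    · rw [if_neg hs]
      have : DirectSum.decompose 𝒜 x (τ * σ⁻¹) = 0 := by
        simpa using DFinsupp.notMem_support_iff.mp hs
      rw [this]
      simp
  -- find a nonzero component of ⁅x,p⁆
  have hd : DirectSum.decompose 𝒜 ⁅x, p⁆ ≠ 0 := by
    intro h
    apply hne
    have := congrArg (DirectSum.decompose 𝒜).symm h
    simpa using this
  obtain ⟨τ, hτ⟩ := DFinsupp.ne_iff.mp hd
  have hτ' : (DirectSum.decompose 𝒜 ⁅x, p⁆ τ : Q) ≠ 0 := by
    intro h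
    exact hτ (by simpa using Subtype.ext (by simpa using h))
  refine ⟨τ * σ⁻¹, (DirectSum.decompose 𝒜 x (τ * σ⁻¹) : Q),
    (DirectSum.decompose 𝒜 x (τ * σ⁻¹)).2, hLgr x hxL _, ?_, ?_⟩
  · rw [← key τ]; exact hτ'
  · rw [← key τ]; exact hLgr _ hbL τ
end

section
/- Let L = L_{-1} ⊕ L_0 ⊕ L_1 be a semiprime 3-graded Lie algebra and I an ideal of L. Let π_i denote the canonical projection of L onto L_i (i ∈ {-1, 0, 1}), let J = [[I, I], [I, I]], and let Ĩ = J + π_{-1}(J) + π_1(J). Then I is an essential ideal of L if and only if Ĩ is an essential ideal of L. -/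
/-- The canonical projection `π_i` onto the degree-`i` component of a graded module. -/
noncomputable def gproj {Φ : Type*} [CommRing Φ] {L : Type*} [AddCommGroup L] [Module Φ L]
    (𝒜 : ℤ → Submodule Φ L) [DirectSum.Decomposition 𝒜] (i : ℤ) : L →ₗ[Φ] L :=
  (𝒜 i).subtype ∘ₗ (DirectSum.component Φ ℤ (fun j => ↥(𝒜 j)) i) ∘ₗ
    (DirectSum.decomposeLinearEquiv 𝒜).toLinearMap

section aux
variable {Φ : Type*} [CommRing Φ] {L : Type*} [LieRing L] [LieAlgebra Φ L]
  (𝒜 : ℤ → Submodule Φ L) [DirectSum.Decomposition 𝒜]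

lemma gproj_apply (i : ℤ) (x : L) :
    gproj 𝒜 i x = (DirectSum.decompose 𝒜 x i : L) := rfl

lemma gproj_mem (i : ℤ) (x : L) : gproj 𝒜 i x ∈ 𝒜 i := by
  rw [gproj_apply]; exact SetLike.coe_mem _

lemma gproj_of_mem {i : ℤ} {x : L} (h : x ∈ 𝒜 i) : gproj 𝒜 i x = x := by
  rw [gproj_apply]; exact DirectSum.decompose_of_mem_same 𝒜 h

lemma gproj_of_mem_ne {i j : ℤ} {x : L} (h : x ∈ 𝒜 i) (hij : i ≠ j) : gproj 𝒜 j x = 0 := by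
  rw [gproj_apply]
  have := DirectSum.decompose_of_mem_ne 𝒜 h hij
  exact_mod_cast this

lemma gproj_total (htriv : ∀ k : ℤ, 1 < |k| → 𝒜 k = ⊥) (x : L) :
    gproj 𝒜 (-1) x + gproj 𝒜 0 x + gproj 𝒜 1 x = x := by
  classical
  have hsupp : (DirectSum.decompose 𝒜 x).support ⊆ ({-1, 0, 1} : Finset ℤ) := by
    intro i hi
    by_contra hmem
    have h2 : 1 < |i| := by
      simp only [Finset.mem_insert, Finset.mem_singleton] at hmem
      push_neg at hmem
      rcases abs_cases i with ⟨h, _⟩ | ⟨h, _⟩ <;> omega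
    have hb := htriv i h2
    rw [DFinsupp.mem_support_iff] at hi
    apply hi
    have hm : (DirectSum.decompose 𝒜 x i : L) ∈ 𝒜 i := SetLike.coe_mem _
    exact Subtype.ext ((Submodule.eq_bot_iff _).mp hb _ hm)
  have h1 := DirectSum.sum_support_decompose 𝒜 x
  have h2 : x = ∑ i ∈ ({-1, 0, 1} : Finset ℤ), (DirectSum.decompose 𝒜 x i : L) := by
    rw [← Finset.sum_subset hsupp (fun i _ hni => by
      rw [DFinsupp.notMem_support_iff] at hni
      simp [hni])]
    exact h1.symm
  rw [gproj_apply, gproj_apply, gproj_apply]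
  conv_rhs => rw [h2]
  rw [Finset.sum_insert (by decide), Finset.sum_insert (by decide), Finset.sum_singleton,
    add_assoc]

variable (hbracket : ∀ (i j : ℤ) (x y : L), x ∈ 𝒜 i → y ∈ 𝒜 j → ⁅x, y⁆ ∈ 𝒜 (i + j))
variable (htriv : ∀ k : ℤ, 1 < |k| → 𝒜 k = ⊥)

include hbracket htriv in
lemma lie_gproj_same_zero {σ : ℤ} (hσ : σ = 1 ∨ σ = -1) (x y : L) :
    ⁅gproj 𝒜 σ x, gproj 𝒜 σ y⁆ = 0 := by
  have h := hbracket σ σ _ _ (gproj_mem 𝒜 σ x) (gproj_mem 𝒜 σ y)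
  have hb : 𝒜 (σ + σ) = ⊥ := htriv _ (by rcases hσ with rfl | rfl <;> decide)
  rw [hb, Submodule.mem_bot] at h
  exact h

include hbracket htriv in
lemma gproj_lie {σ : ℤ} (hσ : σ = 1 ∨ σ = -1) (x y : L) :
    gproj 𝒜 σ ⁅x, y⁆ = ⁅gproj 𝒜 0 x, gproj 𝒜 σ y⁆ + ⁅gproj 𝒜 σ x, gproj 𝒜 0 y⁆ := by
  have hx := gproj_total 𝒜 htriv x
  have hy := gproj_total 𝒜 htriv y
  set a := gproj 𝒜 (-1) x with ha
  set b := gproj 𝒜 0 x with hb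
  set c := gproj 𝒜 1 x with hc
  set d := gproj 𝒜 (-1) y with hd
  set e := gproj 𝒜 0 y with he
  set f := gproj 𝒜 1 y with hf
  have hz : ∀ (i j : ℤ), i + j ≠ σ → ∀ (u v : L), u ∈ 𝒜 i → v ∈ 𝒜 j →
      gproj 𝒜 σ ⁅u, v⁆ = 0 := fun i j hij u v hu hv =>
    gproj_of_mem_ne 𝒜 (hbracket i j u v hu hv) hij
  have hkeep : ∀ (i j : ℤ), i + j = σ → ∀ (u v : L), u ∈ 𝒜 i → v ∈ 𝒜 j →
      gproj 𝒜 σ ⁅u, v⁆ = ⁅u, v⁆ := fun i j hij u v hu hv =>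
    gproj_of_mem 𝒜 (hij ▸ hbracket i j u v hu hv)
  have expand : ⁅x, y⁆ =
      ⁅a,d⁆ + ⁅a,e⁆ + ⁅a,f⁆ + ⁅b,d⁆ + ⁅b,e⁆ + ⁅b,f⁆ + ⁅c,d⁆ + ⁅c,e⁆ + ⁅c,f⁆ := by
    conv_lhs => rw [← hx, ← hy]
    simp only [add_lie, lie_add]
    abel
  rw [expand]
  simp only [map_add]
  rcases hσ with rfl | rfl
  · have z1 : gproj 𝒜 1 ⁅a,d⁆ = 0 := hz _ _ (by decide) _ _ (gproj_mem 𝒜 _ x) (gproj_mem 𝒜 _ y)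
    have z2 : gproj 𝒜 1 ⁅a,e⁆ = 0 := hz _ _ (by decide) _ _ (gproj_mem 𝒜 _ x) (gproj_mem 𝒜 _ y)
    have z3 : gproj 𝒜 1 ⁅a,f⁆ = 0 := hz _ _ (by decide) _ _ (gproj_mem 𝒜 _ x) (gproj_mem 𝒜 _ y)
    have z4 : gproj 𝒜 1 ⁅b,d⁆ = 0 := hz _ _ (by decide) _ _ (gproj_mem 𝒜 _ x) (gproj_mem 𝒜 _ y)
    have z5 : gproj 𝒜 1 ⁅b,e⁆ = 0 := hz _ _ (by decide) _ _ (gproj_mem 𝒜 _ x) (gproj_mem 𝒜 _ y)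
    have z6 : gproj 𝒜 1 ⁅c,d⁆ = 0 := hz _ _ (by decide) _ _ (gproj_mem 𝒜 _ x) (gproj_mem 𝒜 _ y)
    have z7 : gproj 𝒜 1 ⁅c,f⁆ = 0 := hz _ _ (by decide) _ _ (gproj_mem 𝒜 _ x) (gproj_mem 𝒜 _ y)
    have k1 : gproj 𝒜 1 ⁅b,f⁆ = ⁅b,f⁆ := hkeep _ _ (by decide) _ _ (gproj_mem 𝒜 _ x) (gproj_mem 𝒜 _ y)
    have k2 : gproj 𝒜 1 ⁅c,e⁆ = ⁅c,e⁆ := hkeep _ _ (by decide) _ _ (gproj_mem 𝒜 _ x) (gproj_mem 𝒜 _ y)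
    rw [z1, z2, z3, z4, z5, z6, z7, k1, k2]
    abel
  · have z1 : gproj 𝒜 (-1) ⁅a,d⁆ = 0 := hz _ _ (by decide) _ _ (gproj_mem 𝒜 _ x) (gproj_mem 𝒜 _ y)
    have z2 : gproj 𝒜 (-1) ⁅a,f⁆ = 0 := hz _ _ (by decide) _ _ (gproj_mem 𝒜 _ x) (gproj_mem 𝒜 _ y)
    have z3 : gproj 𝒜 (-1) ⁅b,e⁆ = 0 := hz _ _ (by decide) _ _ (gproj_mem 𝒜 _ x) (gproj_mem 𝒜 _ y)
    have z4 : gproj 𝒜 (-1) ⁅b,f⁆ = 0 := hz _ _ (by decide) _ _ (gproj_mem 𝒜 _ x) (gproj_mem 𝒜 _ y)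
    have z5 : gproj 𝒜 (-1) ⁅c,d⁆ = 0 := hz _ _ (by decide) _ _ (gproj_mem 𝒜 _ x) (gproj_mem 𝒜 _ y)
    have z6 : gproj 𝒜 (-1) ⁅c,e⁆ = 0 := hz _ _ (by decide) _ _ (gproj_mem 𝒜 _ x) (gproj_mem 𝒜 _ y)
    have z7 : gproj 𝒜 (-1) ⁅c,f⁆ = 0 := hz _ _ (by decide) _ _ (gproj_mem 𝒜 _ x) (gproj_mem 𝒜 _ y)
    have k1 : gproj 𝒜 (-1) ⁅b,d⁆ = ⁅b,d⁆ := hkeep _ _ (by decide) _ _ (gproj_mem 𝒜 _ x) (gproj_mem 𝒜 _ y)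
    have k2 : gproj 𝒜 (-1) ⁅a,e⁆ = ⁅a,e⁆ := hkeep _ _ (by decide) _ _ (gproj_mem 𝒜 _ x) (gproj_mem 𝒜 _ y)
    rw [z1, z2, z3, z4, z5, z6, z7, k1, k2]
    abel

include hbracket htriv in
lemma gproj_lie_congr {σ : ℤ} (hσ : σ = 1 ∨ σ = -1) (x y : L) :
    gproj 𝒜 σ ⁅x, y⁆ + ⁅gproj 𝒜 0 x, gproj 𝒜 0 y⁆
      = ⁅gproj 𝒜 0 x, y⁆ + ⁅gproj 𝒜 σ x, y⁆ - ⁅x, gproj 𝒜 (-σ) y⁆ := by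
  have hx := gproj_total 𝒜 htriv x
  have hy := gproj_total 𝒜 htriv y
  have hz1 : ⁅gproj 𝒜 1 x, gproj 𝒜 1 y⁆ = 0 :=
    lie_gproj_same_zero 𝒜 hbracket htriv (Or.inl rfl) x y
  have hz2 : ⁅gproj 𝒜 (-1) x, gproj 𝒜 (-1) y⁆ = 0 :=
    lie_gproj_same_zero 𝒜 hbracket htriv (Or.inr rfl) x y
  rcases hσ with rfl | rfl
  · rw [gproj_lie 𝒜 hbracket htriv (Or.inl rfl)]
    have e1 : ⁅gproj 𝒜 0 x, y⁆
        = ⁅gproj 𝒜 0 x, gproj 𝒜 (-1) y⁆ + ⁅gproj 𝒜 0 x, gproj 𝒜 0 y⁆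
          + ⁅gproj 𝒜 0 x, gproj 𝒜 1 y⁆ := by
      conv_lhs => rw [← hy]
      simp only [lie_add]
    have e2 : ⁅gproj 𝒜 1 x, y⁆
        = ⁅gproj 𝒜 1 x, gproj 𝒜 (-1) y⁆ + ⁅gproj 𝒜 1 x, gproj 𝒜 0 y⁆
          + ⁅gproj 𝒜 1 x, gproj 𝒜 1 y⁆ := by
      conv_lhs => rw [← hy]
      simp only [lie_add]
    have e3 : ⁅x, gproj 𝒜 (-1) y⁆
        = ⁅gproj 𝒜 (-1) x, gproj 𝒜 (-1) y⁆ + ⁅gproj 𝒜 0 x, gproj 𝒜 (-1) y⁆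
          + ⁅gproj 𝒜 1 x, gproj 𝒜 (-1) y⁆ := by
      conv_lhs => rw [← hx]
      simp only [add_lie]
    rw [e1, e2, e3, hz1, hz2]
    abel
  · rw [gproj_lie 𝒜 hbracket htriv (Or.inr rfl)]
    simp only [neg_neg]
    have e1 : ⁅gproj 𝒜 0 x, y⁆
        = ⁅gproj 𝒜 0 x, gproj 𝒜 (-1) y⁆ + ⁅gproj 𝒜 0 x, gproj 𝒜 0 y⁆
          + ⁅gproj 𝒜 0 x, gproj 𝒜 1 y⁆ := by
      conv_lhs => rw [← hy]
      simp only [lie_add]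
    have e2 : ⁅gproj 𝒜 (-1) x, y⁆
        = ⁅gproj 𝒜 (-1) x, gproj 𝒜 (-1) y⁆ + ⁅gproj 𝒜 (-1) x, gproj 𝒜 0 y⁆
          + ⁅gproj 𝒜 (-1) x, gproj 𝒜 1 y⁆ := by
      conv_lhs => rw [← hy]
      simp only [lie_add]
    have e3 : ⁅x, gproj 𝒜 1 y⁆
        = ⁅gproj 𝒜 (-1) x, gproj 𝒜 1 y⁆ + ⁅gproj 𝒜 0 x, gproj 𝒜 1 y⁆
          + ⁅gproj 𝒜 1 x, gproj 𝒜 1 y⁆ := by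
      conv_lhs => rw [← hx]
      simp only [add_lie]
    rw [e1, e2, e3, hz1, hz2]
    abel

lemma lie_mem_of (I : LieIdeal Φ L) {p q G1 G2 : L}
    (h1 : p + G1 ∈ I) (h2 : q + G2 ∈ I) (h3 : ⁅G1, G2⁆ ∈ I) : ⁅p, q⁆ ∈ I := by
  have e : ⁅p, q⁆ = ⁅p + G1, q + G2⁆ - ⁅p + G1, G2⁆ - ⁅G1, q + G2⁆ + ⁅G1, G2⁆ := by
    simp only [add_lie, lie_add]
    abel
  rw [e]
  refine add_mem (sub_mem (sub_mem (I.lie_mem h2) ?_) (I.lie_mem h2)) h3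
  rw [← lie_skew]
  exact neg_mem (I.lie_mem h1)

include hbracket htriv in
lemma gproj_lie_mem (I : LieIdeal Φ L) {σ : ℤ} (hσ : σ = 1 ∨ σ = -1) {x y : L}
    (hx : x ∈ I) (hy : y ∈ I) :
    gproj 𝒜 σ ⁅x, y⁆ + ⁅gproj 𝒜 0 x, gproj 𝒜 0 y⁆ ∈ I := by
  rw [gproj_lie_congr 𝒜 hbracket htriv hσ]
  refine sub_mem (add_mem (I.lie_mem hy) (I.lie_mem hy)) ?_
  rw [← lie_skew]
  exact neg_mem (I.lie_mem hx)

include hbracket htriv in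
lemma G_mem (I : LieIdeal Φ L) {a b c d : L}
    (ha : a ∈ I) (hb : b ∈ I) (hc : c ∈ I) (hd : d ∈ I) :
    ⁅⁅gproj 𝒜 0 a, gproj 𝒜 0 b⁆, ⁅gproj 𝒜 0 c, gproj 𝒜 0 d⁆⁆ ∈ I := by
  refine lie_mem_of I (G1 := gproj 𝒜 1 ⁅a, b⁆) (G2 := gproj 𝒜 1 ⁅c, d⁆) ?_ ?_ ?_
  · rw [add_comm]
    exact gproj_lie_mem 𝒜 hbracket htriv I (Or.inl rfl) ha hb
  · rw [add_comm]
    exact gproj_lie_mem 𝒜 hbracket htriv I (Or.inl rfl) hc hd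
  · rw [lie_gproj_same_zero 𝒜 hbracket htriv (Or.inl rfl)]
    exact zero_mem _

include hbracket htriv in
lemma proj_bracket_proj_mem (I : LieIdeal Φ L) {σ τ : ℤ} (hσ : σ = 1 ∨ σ = -1)
    (hτ : τ = 1 ∨ τ = -1) {u v : L}
    (hu : u ∈ (⁅I, I⁆ : LieIdeal Φ L)) (hv : v ∈ (⁅I, I⁆ : LieIdeal Φ L)) :
    ⁅gproj 𝒜 σ u, gproj 𝒜 τ v⁆ ∈ I := by
  rw [← LieSubmodule.mem_toSubmodule, LieSubmodule.lieIdeal_oper_eq_linear_span'] at hu hv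
  induction hu, hv using Submodule.span_induction₂ with
  | mem_mem x y hx hy =>
    obtain ⟨a, ha, b, hb, rfl⟩ := hx
    obtain ⟨c, hc, d, hd, rfl⟩ := hy
    refine lie_mem_of I (G1 := ⁅gproj 𝒜 0 a, gproj 𝒜 0 b⁆)
      (G2 := ⁅gproj 𝒜 0 c, gproj 𝒜 0 d⁆) ?_ ?_ ?_
    · exact gproj_lie_mem 𝒜 hbracket htriv I hσ ha hb
    · exact gproj_lie_mem 𝒜 hbracket htriv I hτ hc hd
    · exact G_mem 𝒜 hbracket htriv I ha hb hc hd
  | zero_left y hy => simp only [map_zero, zero_lie]; exact zero_mem _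
  | zero_right x hx => simp only [map_zero, lie_zero]; exact zero_mem _
  | add_left x y z hx hy hz h1 h2 =>
    rw [map_add, add_lie]; exact add_mem h1 h2
  | add_right x y z hx hy hz h1 h2 =>
    rw [map_add, lie_add]; exact add_mem h1 h2
  | smul_left r x y hx hy h =>
    rw [map_smul, smul_lie]; exact Submodule.smul_mem _ r h
  | smul_right r x y hx hy h =>
    rw [map_smul, lie_smul]; exact Submodule.smul_mem _ r h

include hbracket htriv in
lemma proj0_bracket_mem (I : LieIdeal Φ L) {u v : L}
    (hu : u ∈ (⁅I, I⁆ : LieIdeal Φ L)) (hv : v ∈ (⁅I, I⁆ : LieIdeal Φ L)) :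
    ⁅gproj 𝒜 0 u, gproj 𝒜 0 v⁆ ∈ I := by
  have hu' : u ∈ I := LieSubmodule.lie_le_left I I hu
  have hv' : v ∈ I := LieSubmodule.lie_le_left I I hv
  have hx := gproj_total 𝒜 htriv u
  have hy := gproj_total 𝒜 htriv v
  have E1 : ⁅u, v⁆
      = ⁅gproj 𝒜 (-1) u, gproj 𝒜 (-1) v⁆ + ⁅gproj 𝒜 (-1) u, gproj 𝒜 0 v⁆
        + ⁅gproj 𝒜 (-1) u, gproj 𝒜 1 v⁆ + ⁅gproj 𝒜 0 u, gproj 𝒜 (-1) v⁆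
        + ⁅gproj 𝒜 0 u, gproj 𝒜 0 v⁆ + ⁅gproj 𝒜 0 u, gproj 𝒜 1 v⁆
        + ⁅gproj 𝒜 1 u, gproj 𝒜 (-1) v⁆ + ⁅gproj 𝒜 1 u, gproj 𝒜 0 v⁆
        + ⁅gproj 𝒜 1 u, gproj 𝒜 1 v⁆ := by
    conv_lhs => rw [← hx, ← hy]
    simp only [add_lie, lie_add]
    abel
  have E2 : ⁅gproj 𝒜 (-1) u, v⁆
      = ⁅gproj 𝒜 (-1) u, gproj 𝒜 (-1) v⁆ + ⁅gproj 𝒜 (-1) u, gproj 𝒜 0 v⁆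
        + ⁅gproj 𝒜 (-1) u, gproj 𝒜 1 v⁆ := by
    conv_lhs => rw [← hy]
    simp only [lie_add]
  have E3 : ⁅gproj 𝒜 1 u, v⁆
      = ⁅gproj 𝒜 1 u, gproj 𝒜 (-1) v⁆ + ⁅gproj 𝒜 1 u, gproj 𝒜 0 v⁆
        + ⁅gproj 𝒜 1 u, gproj 𝒜 1 v⁆ := by
    conv_lhs => rw [← hy]
    simp only [lie_add]
  have E4 : ⁅u, gproj 𝒜 (-1) v⁆
      = ⁅gproj 𝒜 (-1) u, gproj 𝒜 (-1) v⁆ + ⁅gproj 𝒜 0 u, gproj 𝒜 (-1) v⁆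
        + ⁅gproj 𝒜 1 u, gproj 𝒜 (-1) v⁆ := by
    conv_lhs => rw [← hx]
    simp only [add_lie]
  have E5 : ⁅u, gproj 𝒜 1 v⁆
      = ⁅gproj 𝒜 (-1) u, gproj 𝒜 1 v⁆ + ⁅gproj 𝒜 0 u, gproj 𝒜 1 v⁆
        + ⁅gproj 𝒜 1 u, gproj 𝒜 1 v⁆ := by
    conv_lhs => rw [← hx]
    simp only [add_lie]
  have e : ⁅gproj 𝒜 0 u, gproj 𝒜 0 v⁆
      = ⁅u, v⁆ - ⁅gproj 𝒜 (-1) u, v⁆ - ⁅gproj 𝒜 1 u, v⁆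
        - ⁅u, gproj 𝒜 (-1) v⁆ - ⁅u, gproj 𝒜 1 v⁆
        + ⁅gproj 𝒜 (-1) u, gproj 𝒜 (-1) v⁆ + ⁅gproj 𝒜 (-1) u, gproj 𝒜 1 v⁆
        + ⁅gproj 𝒜 1 u, gproj 𝒜 (-1) v⁆ + ⁅gproj 𝒜 1 u, gproj 𝒜 1 v⁆ := by
    rw [E1, E2, E3, E4, E5]
    abel
  have m1 : ⁅u, gproj 𝒜 (-1) v⁆ ∈ I := by
    rw [← lie_skew]; exact neg_mem (I.lie_mem hu')
  have m2 : ⁅u, gproj 𝒜 1 v⁆ ∈ I := by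
    rw [← lie_skew]; exact neg_mem (I.lie_mem hu')
  have m3 : ⁅gproj 𝒜 (-1) u, v⁆ ∈ I := I.lie_mem hv'
  have m4 : ⁅gproj 𝒜 1 u, v⁆ ∈ I := I.lie_mem hv'
  have m5 : ⁅gproj 𝒜 (-1) u, gproj 𝒜 (-1) v⁆ ∈ I :=
    proj_bracket_proj_mem 𝒜 hbracket htriv I (Or.inr rfl) (Or.inr rfl) hu hv
  have m6 : ⁅gproj 𝒜 (-1) u, gproj 𝒜 1 v⁆ ∈ I :=
    proj_bracket_proj_mem 𝒜 hbracket htriv I (Or.inr rfl) (Or.inl rfl) hu hv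
  have m7 : ⁅gproj 𝒜 1 u, gproj 𝒜 (-1) v⁆ ∈ I :=
    proj_bracket_proj_mem 𝒜 hbracket htriv I (Or.inl rfl) (Or.inr rfl) hu hv
  have m8 : ⁅gproj 𝒜 1 u, gproj 𝒜 1 v⁆ ∈ I :=
    proj_bracket_proj_mem 𝒜 hbracket htriv I (Or.inl rfl) (Or.inl rfl) hu hv
  rw [e]
  exact add_mem (add_mem (add_mem (add_mem (sub_mem (sub_mem (sub_mem (sub_mem
    (I.lie_mem hv') m3) m4) m1) m2) m5) m6) m7) m8

include hbracket htriv in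
lemma J_graded_mem (I : LieIdeal Φ L) {x : L}
    (hx : x ∈ (⁅(⁅I, I⁆ : LieIdeal Φ L), (⁅I, I⁆ : LieIdeal Φ L)⁆ : LieIdeal Φ L)) :
    x ∈ I ∧ gproj 𝒜 1 x ∈ I ∧ gproj 𝒜 (-1) x ∈ I := by
  rw [← LieSubmodule.mem_toSubmodule, LieSubmodule.lieIdeal_oper_eq_linear_span'] at hx
  induction hx using Submodule.span_induction with
  | mem m hm =>
    obtain ⟨u, hu, v, hv, rfl⟩ := hm
    have hu' : u ∈ I := LieSubmodule.lie_le_left I I hu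
    have hv' : v ∈ I := LieSubmodule.lie_le_left I I hv
    have hK := proj0_bracket_mem 𝒜 hbracket htriv I hu hv
    refine ⟨I.lie_mem hv', ?_, ?_⟩
    · have h := gproj_lie_mem 𝒜 hbracket htriv I (Or.inl rfl) hu' hv'
      have e : gproj 𝒜 1 ⁅u, v⁆
          = (gproj 𝒜 1 ⁅u, v⁆ + ⁅gproj 𝒜 0 u, gproj 𝒜 0 v⁆)
            - ⁅gproj 𝒜 0 u, gproj 𝒜 0 v⁆ := by abel
      rw [e]
      exact sub_mem h hK
    · have h := gproj_lie_mem 𝒜 hbracket htriv I (Or.inr rfl) hu' hv'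
      have e : gproj 𝒜 (-1) ⁅u, v⁆
          = (gproj 𝒜 (-1) ⁅u, v⁆ + ⁅gproj 𝒜 0 u, gproj 𝒜 0 v⁆)
            - ⁅gproj 𝒜 0 u, gproj 𝒜 0 v⁆ := by abel
      rw [e]
      exact sub_mem h hK
  | zero =>
    refine ⟨zero_mem _, ?_, ?_⟩ <;> (rw [map_zero]; exact zero_mem _)
  | add x y hx hy ihx ihy =>
    exact ⟨add_mem ihx.1 ihy.1,
      by rw [map_add]; exact add_mem ihx.2.1 ihy.2.1,
      by rw [map_add]; exact add_mem ihx.2.2 ihy.2.2⟩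
  | smul r x hx ih =>
    exact ⟨Submodule.smul_mem _ r ih.1,
      by rw [map_smul]; exact Submodule.smul_mem _ r ih.2.1,
      by rw [map_smul]; exact Submodule.smul_mem _ r ih.2.2⟩

end aux

/-- Let `L = L₋₁ ⊕ L₀ ⊕ L₁` be a semiprime 3-graded Lie
algebra, `I` an ideal of `L`, `J = ⁅⁅I, I⁆, ⁅I, I⁆⁆` and
`Ĩ = J + π₋₁(J) + π₁(J)`.  Then `I` is an essential ideal of `L` if and only if
`Ĩ` is an essential ideal of `L`. -/
theorem essential_iff_tilde_essential
    {Φ : Type*} [CommRing Φ] {L : Type*} [LieRing L] [LieAlgebra Φ L]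
    (𝒜 : ℤ → Submodule Φ L) [DirectSum.Decomposition 𝒜]
    (hbracket : ∀ (i j : ℤ) (x y : L), x ∈ 𝒜 i → y ∈ 𝒜 j → ⁅x, y⁆ ∈ 𝒜 (i + j))
    (htriv : ∀ k : ℤ, 1 < |k| → 𝒜 k = ⊥)
    (hsemiprime : ∀ K : LieIdeal Φ L, K ≠ ⊥ → ⁅K, K⁆ ≠ (⊥ : LieIdeal Φ L))
    (I : LieIdeal Φ L)
    (J : LieIdeal Φ L) (hJ : J = ⁅(⁅I, I⁆ : LieIdeal Φ L), (⁅I, I⁆ : LieIdeal Φ L)⁆)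
    (Itilde : Submodule Φ L)
    (hItilde : Itilde = J.toSubmodule ⊔ J.toSubmodule.map (gproj 𝒜 (-1)) ⊔
        J.toSubmodule.map (gproj 𝒜 1)) :
    (∀ K : LieIdeal Φ L, K ≠ ⊥ → I ⊓ K ≠ ⊥) ↔
      (∀ K : LieIdeal Φ L, K ≠ ⊥ → Itilde ⊓ K.toSubmodule ≠ ⊥) := by
  subst hItilde
  subst hJ
  constructor
  · intro hI K hK
    have h1 : I ⊓ K ≠ ⊥ := hI K hK
    have h2 := hsemiprime _ h1
    have h3 := hsemiprime _ h2
    obtain ⟨z, hz, hz0⟩ : ∃ z, z ∈ (⁅(⁅I ⊓ K, I ⊓ K⁆ : LieIdeal Φ L),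
        (⁅I ⊓ K, I ⊓ K⁆ : LieIdeal Φ L)⁆ : LieIdeal Φ L) ∧ z ≠ 0 := by
      by_contra hcon
      push_neg at hcon
      exact h3 ((LieSubmodule.eq_bot_iff _).mpr fun m hm => hcon m hm)
    have hle1 : (⁅(⁅I ⊓ K, I ⊓ K⁆ : LieIdeal Φ L), (⁅I ⊓ K, I ⊓ K⁆ : LieIdeal Φ L)⁆ :
        LieIdeal Φ L) ≤ ⁅(⁅I, I⁆ : LieIdeal Φ L), (⁅I, I⁆ : LieIdeal Φ L)⁆ :=
      LieSubmodule.mono_lie (LieSubmodule.mono_lie inf_le_left inf_le_left)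
        (LieSubmodule.mono_lie inf_le_left inf_le_left)
    have hle2 : (⁅(⁅I ⊓ K, I ⊓ K⁆ : LieIdeal Φ L), (⁅I ⊓ K, I ⊓ K⁆ : LieIdeal Φ L)⁆ :
        LieIdeal Φ L) ≤ K :=
      le_trans (LieSubmodule.lie_le_left _ _) (le_trans (LieSubmodule.lie_le_left _ _) inf_le_right)
    intro hbot
    have hmem : z ∈ ((⁅(⁅I, I⁆ : LieIdeal Φ L), (⁅I, I⁆ : LieIdeal Φ L)⁆ :
        LieIdeal Φ L).toSubmodule ⊔ (⁅(⁅I, I⁆ : LieIdeal Φ L), (⁅I, I⁆ : LieIdeal Φ L)⁆ :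
        LieIdeal Φ L).toSubmodule.map (gproj 𝒜 (-1)) ⊔ (⁅(⁅I, I⁆ : LieIdeal Φ L),
        (⁅I, I⁆ : LieIdeal Φ L)⁆ : LieIdeal Φ L).toSubmodule.map (gproj 𝒜 1)) ⊓
        K.toSubmodule := by
      refine Submodule.mem_inf.mpr ⟨Submodule.mem_sup_left (Submodule.mem_sup_left ?_), ?_⟩
      · exact hle1 hz
      · exact hle2 hz
    rw [hbot] at hmem
    exact hz0 (Submodule.mem_bot _ |>.mp hmem)
  · intro hT K hK
    have h1 := hT K hK
    obtain ⟨z, hz, hz0⟩ : ∃ z, z ∈ ((⁅(⁅I, I⁆ : LieIdeal Φ L), (⁅I, I⁆ : LieIdeal Φ L)⁆ :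
        LieIdeal Φ L).toSubmodule ⊔ _ ⊔ _) ⊓ K.toSubmodule ∧ z ≠ 0 := by
      by_contra hcon
      push_neg at hcon
      exact h1 ((Submodule.eq_bot_iff _).mpr fun m hm => hcon m hm)
    obtain ⟨hz1, hz2⟩ := Submodule.mem_inf.mp hz
    have hsub : ((⁅(⁅I, I⁆ : LieIdeal Φ L), (⁅I, I⁆ : LieIdeal Φ L)⁆ :
        LieIdeal Φ L).toSubmodule ⊔ (⁅(⁅I, I⁆ : LieIdeal Φ L), (⁅I, I⁆ : LieIdeal Φ L)⁆ :
        LieIdeal Φ L).toSubmodule.map (gproj 𝒜 (-1)) ⊔ (⁅(⁅I, I⁆ : LieIdeal Φ L),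
        (⁅I, I⁆ : LieIdeal Φ L)⁆ : LieIdeal Φ L).toSubmodule.map (gproj 𝒜 1))
        ≤ I.toSubmodule := by
      refine sup_le (sup_le ?_ ?_) ?_
      · intro y hy
        exact (J_graded_mem 𝒜 hbracket htriv I hy).1
      · rw [Submodule.map_le_iff_le_comap]
        intro y hy
        exact Submodule.mem_comap.mpr (J_graded_mem 𝒜 hbracket htriv I hy).2.2
      · rw [Submodule.map_le_iff_le_comap]
        intro y hy
        exact Submodule.mem_comap.mpr (J_graded_mem 𝒜 hbracket htriv I hy).2.1
    intro hbot
    have hmem : z ∈ I ⊓ K := ⟨hsub hz1, hz2⟩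
    rw [hbot] at hmem
    exact hz0 (LieSubmodule.mem_bot _ |>.mp hmem)
end

section
/- Let L = L_{-1} ⊕ L_0 ⊕ L_1 be a semiprime 3-graded Lie algebra and let I be a graded ideal of L. Then I is an essential ideal of L (i.e., meets every nonzero ideal nontrivially) if and only if I is a graded essential ideal of L (i.e., meets every nonzero graded ideal nontrivially). -/
open DirectSum

/-- Bracket with a fixed left element, as an `AddMonoidHom`. -/
private def lieLeft {L : Type*} [LieRing L] (a : L) : L →+ L :=
  AddMonoidHom.mk' (fun y => ⁅a, y⁆) (lie_add a)

private def lieRight {L : Type*} [LieRing L] (b : L) : L →+ L :=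
  AddMonoidHom.mk' (fun y => ⁅y, b⁆) (fun x y => add_lie x y b)

private theorem decompose_lie_homog
    {Φ : Type*} [CommRing Φ] {L : Type*} [LieRing L] [LieAlgebra Φ L]
    (𝒜 : ℤ → Submodule Φ L) [DirectSum.Decomposition 𝒜]
    (hbracket : ∀ (i j : ℤ) (x y : L), x ∈ 𝒜 i → y ∈ 𝒜 j → ⁅x, y⁆ ∈ 𝒜 (i + j))
    {j : ℤ} {a : L} (ha : a ∈ 𝒜 j) (x : L) (k : ℤ) :
    (DirectSum.decompose 𝒜 ⁅a, x⁆ (j + k) : L) = ⁅a, (DirectSum.decompose 𝒜 x k : L)⁆ := by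
  classical
  set s := (DirectSum.decompose 𝒜 x).support with hs
  have hxsum : x = ∑ m ∈ s, (DirectSum.decompose 𝒜 x m : L) :=
    (DirectSum.sum_support_decompose 𝒜 x).symm
  conv_lhs => rw [hxsum]
  have hmap : ⁅a, ∑ m ∈ s, (DirectSum.decompose 𝒜 x m : L)⁆
      = ∑ m ∈ s, ⁅a, (DirectSum.decompose 𝒜 x m : L)⁆ :=
    map_sum (lieLeft a) _ s
  rw [hmap, DirectSum.decompose_sum]
  have hterm : ∀ m : ℤ,
      (DirectSum.decompose 𝒜 ⁅a, (DirectSum.decompose 𝒜 x m : L)⁆ (j + k) : L)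
        = if m = k then ⁅a, (DirectSum.decompose 𝒜 x m : L)⁆ else 0 := by
    intro m
    have hmem : ⁅a, (DirectSum.decompose 𝒜 x m : L)⁆ ∈ 𝒜 (j + m) :=
      hbracket j m a _ ha (DirectSum.decompose 𝒜 x m).2
    by_cases hmk : m = k
    · subst hmk
      simp [DirectSum.decompose_of_mem_same 𝒜 hmem]
    · have : (j + m : ℤ) ≠ j + k := by omega
      simp [DirectSum.decompose_of_mem_ne 𝒜 hmem this, hmk]
  have hsum : ((∑ m ∈ s, DirectSum.decompose 𝒜 ⁅a, (DirectSum.decompose 𝒜 x m : L)⁆)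
        (j + k) : L)
      = ∑ m ∈ s, (DirectSum.decompose 𝒜 ⁅a, (DirectSum.decompose 𝒜 x m : L)⁆ (j + k) : L) := by
    rw [DFinsupp.finset_sum_apply]
    push_cast
    rfl
  rw [hsum]
  rw [Finset.sum_congr rfl fun m _ => hterm m]
  by_cases hks : k ∈ s
  · rw [Finset.sum_ite_eq' s k]
    simp [hks]
  · have hxk : (DirectSum.decompose 𝒜 x k : L) = 0 := by
      have := DFinsupp.notMem_support_iff.mp (hs ▸ hks)
      simp [this]
    rw [Finset.sum_ite_eq' s k]
    simp [hks, hxk]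

/-- Let `L = L₋₁ ⊕ L₀ ⊕ L₁` be a semiprime 3-graded Lie
algebra and let `I` be a graded ideal of `L`.  Then `I` is an essential ideal
of `L` if and only if `I` is a graded essential ideal of `L`. -/
theorem graded_ideal_essential_iff_graded_essential
    {Φ : Type*} [CommRing Φ] {L : Type*} [LieRing L] [LieAlgebra Φ L]
    (𝒜 : ℤ → Submodule Φ L) [DirectSum.Decomposition 𝒜]
    (hbracket : ∀ (i j : ℤ) (x y : L), x ∈ 𝒜 i → y ∈ 𝒜 j → ⁅x, y⁆ ∈ 𝒜 (i + j))
    (htriv : ∀ k : ℤ, 1 < |k| → 𝒜 k = ⊥)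
    (hsemiprime : ∀ K : LieIdeal Φ L, K ≠ ⊥ → ⁅K, K⁆ ≠ (⊥ : LieIdeal Φ L))
    (I : LieIdeal Φ L)
    (hIgr : ∀ y ∈ I, ∀ k : ℤ, (DirectSum.decompose 𝒜 y k : L) ∈ I) :
    (∀ K : LieIdeal Φ L, K ≠ ⊥ → I ⊓ K ≠ ⊥) ↔
      (∀ K : LieIdeal Φ L,
        (∀ y ∈ K, ∀ k : ℤ, (DirectSum.decompose 𝒜 y k : L) ∈ K) →
        K ≠ ⊥ → I ⊓ K ≠ ⊥) := by
  classical
  constructor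
  · intro h K _ hK
    exact h K hK
  · intro h K hK hIK
    -- The centralizer of `I` as a Lie ideal.
    have hIneg : ∀ a ∈ I, ∀ y : L, ⁅a, y⁆ ∈ I := by
      intro a ha y
      have : ⁅y, a⁆ ∈ I := I.lie_mem ha
      have h2 : ⁅a, y⁆ = -⁅y, a⁆ := by rw [lie_skew]
      rw [h2]; exact neg_mem this
    let C : LieIdeal Φ L :=
      { carrier := {x | ∀ a ∈ I, ⁅a, x⁆ = 0}
        add_mem' := by
          intro x y hx hy a ha
          rw [lie_add, hx a ha, hy a ha, add_zero]
        zero_mem' := by intro a _; simp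
        smul_mem' := by
          intro c x hx a ha
          rw [lie_smul, hx a ha, smul_zero]
        lie_mem := by
          intro y x hx a ha
          have : ⁅a, ⁅y, x⁆⁆ = ⁅⁅a, y⁆, x⁆ + ⁅y, ⁅a, x⁆⁆ := leibniz_lie a y x
          rw [this, hx a ha, hx ⁅a, y⁆ (hIneg a ha y), lie_zero, add_zero] }
    have hmemC : ∀ x : L, x ∈ C ↔ ∀ a ∈ I, ⁅a, x⁆ = 0 := fun x => Iff.rfl
    -- K ≤ C since I ⊓ K = ⊥
    have hKC : K ≤ C := by
      intro x hx
      rw [hmemC]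
      intro a ha
      have h1 : ⁅a, x⁆ ∈ I := hIneg a ha x
      have h2 : ⁅a, x⁆ ∈ K := K.lie_mem hx
      have : ⁅a, x⁆ ∈ I ⊓ K := (LieSubmodule.mem_inf _ _ _).mpr ⟨h1, h2⟩
      rw [hIK] at this
      exact (LieSubmodule.mem_bot _).mp this
    have hCne : C ≠ ⊥ := by
      intro hC
      exact hK (le_bot_iff.mp (hC ▸ hKC))
    -- C is graded
    have hCgr : ∀ y ∈ C, ∀ k : ℤ, (DirectSum.decompose 𝒜 y k : L) ∈ C := by
      intro y hy k
      rw [hmemC]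
      intro a ha
      -- decompose a into homogeneous components, each in I
      have hasum : a = ∑ j ∈ (DirectSum.decompose 𝒜 a).support, (DirectSum.decompose 𝒜 a j : L) :=
        (DirectSum.sum_support_decompose 𝒜 a).symm
      have hsum : ⁅a, (DirectSum.decompose 𝒜 y k : L)⁆
          = ∑ j ∈ (DirectSum.decompose 𝒜 a).support,
              ⁅(DirectSum.decompose 𝒜 a j : L), (DirectSum.decompose 𝒜 y k : L)⁆ := by
        conv_lhs => rw [hasum]
        exact map_sum (lieRight _) _ _
      rw [hsum]
      apply Finset.sum_eq_zero
      intro j _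
      have haj : (DirectSum.decompose 𝒜 a j : L) ∈ 𝒜 j := (DirectSum.decompose 𝒜 a j).2
      have hajI : (DirectSum.decompose 𝒜 a j : L) ∈ I := hIgr a ha j
      have hzero : ⁅(DirectSum.decompose 𝒜 a j : L), y⁆ = 0 := hy _ hajI
      have := decompose_lie_homog 𝒜 hbracket haj y k
      rw [hzero] at this
      simp only [DirectSum.decompose_zero] at this
      simpa using this.symm
    -- graded essentiality gives I ⊓ C ≠ ⊥
    have hICne : I ⊓ C ≠ ⊥ := h C hCgr hCne
    -- but ⁅I ⊓ C, I ⊓ C⁆ = ⊥, contradicting semiprimeness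
    apply hsemiprime (I ⊓ C) hICne
    rw [← le_bot_iff]
    rw [LieSubmodule.lie_le_iff]
    intro x hx m hm
    have hxI : x ∈ I := ((LieSubmodule.mem_inf _ _ _).mp hx).1
    have hmC : m ∈ C := ((LieSubmodule.mem_inf _ _ _).mp hm).2
    rw [LieSubmodule.mem_bot]
    exact hmC x hxI
end
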